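/- arXiv:2510.00309 — 2 statements merged into one kernel-verified Lean document; each statement's English description precedes it below -/
import Mathlib

section
/- Let (A, D) be a metric space, μ : A → ℝ a 1-Lipschitz function with supremum μ*. Suppose x, y, x* ∈ A with μ(x*) = μ*, numbers r_x, r_y ≥ 0 with |m_x − μ(x)| ≤ r_x and |m_y − μ(y)| ≤ r_y, and D(y, x*) ≤ r_y. If m_x + 2 r_x ≥ m_y + 2 r_y, then μ* − μ(x) ≤ 3 r_x. -/
theorem LipschitzWith.le_add_two_mul_of_abs_sub_le {A : Type*} [PseudoMetricSpace A]
    {μ : A → ℝ} (hμ : LipschitzWith 1 μ) {y z : A} {m r : ℝ}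
    (hm : |m - μ y| ≤ r) (hd : dist y z ≤ r) : μ z ≤ m + 2 * r := by
  have hz : μ z ≤ μ y + dist z y := by simpa using hμ.le_add_mul z y
  have hy : μ y ≤ m + r := by linarith [(abs_sub_le_iff.1 hm).2]
  linarith [dist_comm z y]

theorem zooming_selection_gap_general {A : Type*} [MetricSpace A]
    (μ : A → ℝ) (hLip : LipschitzWith 1 μ)
    (μstar : ℝ)
    (x y xstar : A) (hxstar : μ xstar = μstar)
    (rx ry mx my : ℝ)
    (hmx : |mx - μ x| ≤ rx) (hmy : |my - μ y| ≤ ry)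
    (hcov : dist y xstar ≤ ry)
    (hsel : mx + 2 * rx ≥ my + 2 * ry) :
    μstar - μ x ≤ 3 * rx := by
  have hmx_le : mx ≤ μ x + rx := by linarith [(abs_sub_le_iff.1 hmx).1]
  have hstar : μstar ≤ mx + 2 * rx := calc
    μstar = μ xstar := hxstar.symm
    _ ≤ my + 2 * ry := hLip.le_add_two_mul_of_abs_sub_le hmy hcov
    _ ≤ mx + 2 * rx := hsel
  linarith

theorem zooming_selection_gap {A : Type*} [MetricSpace A]
    (μ : A → ℝ) (hLip : LipschitzWith 1 μ)
    (μstar : ℝ) (hsup : ∀ a, μ a ≤ μstar)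
    (x y xstar : A) (hxstar : μ xstar = μstar)
    (rx ry mx my : ℝ) (hrx : 0 ≤ rx) (hry : 0 ≤ ry)
    (hmx : |mx - μ x| ≤ rx) (hmy : |my - μ y| ≤ ry)
    (hcov : dist y xstar ≤ ry)
    (hsel : mx + 2 * rx ≥ my + 2 * ry) :
    μstar - μ x ≤ 3 * rx :=
  zooming_selection_gap_general μ hLip μstar x y xstar hxstar rx ry mx my hmx hmy hcov hsel
end

section
/- Let T be a positive integer and let n_t(x), v_t(x), w_t(x) be natural-number-valued functions with n_t(x) = v_t(x) + w_t(x) for all t and x, and suppose w_t(x) ≤ τ for all t, x (bounded pending feedback). Let Δ : X → [0,1] on a finite set X, suppose ∑_{x∈X} n_T(x) ≤ T, and partition X by dyadic bands X_i = {x : 2^{−i−1} < Δ(x) ≤ 2^{−i}}. If ∑_{x∈X_i} Δ(x) v_T(x) ≤ L·2^{i(d+1)} and |X_i| ≤ c·2^{id} for all i, then for every ρ ∈ (0,1): ∑_{x∈X} Δ(x) n_T(x) ≤ ρT + 2 L ρ^{−(d+1)} + 2 c τ ρ^{−d}. -/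
/-!
Split the arms at gap `ρ`. Those with `Δ x ≤ ρ` cost at most `ρ` per pull, hence `ρ T` in total.
Every other arm lies in one of the dyadic bands `i ≤ J = ⌊log₂ ρ⁻¹⌋`, whose regret is the observed
part, bounded by `L 2^{i(d+1)}`, plus at most `τ` pending pulls per arm at cost `≤ 2^{-i}` each,
i.e. `c τ 2^{id} 2^{-i}`. Summed over `i ≤ J`, these are at most `2 L 2^{J(d+1)}` and `2 c τ 2^{Jd}`
(geometric sums with ratio `≥ 2`, resp. `≤ 1/2` after bounding `2^{id} ≤ 2^{Jd}`), and `2^J ≤ ρ⁻¹`.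
-/

open Finset

/-- `⌊log₂ y⌋` for `y ≥ 1` (and `0` for `y < 1`). -/
noncomputable def natLog2 (y : ℝ) : ℕ := Nat.log 2 ⌊y⌋₊

theorem two_pow_natLog2_le {y : ℝ} (hy : 1 ≤ y) : (2 : ℝ) ^ natLog2 y ≤ y := by
  have hfloor : ⌊y⌋₊ ≠ 0 := (Nat.floor_pos.mpr hy).ne'
  calc (2 : ℝ) ^ natLog2 y = ((2 ^ Nat.log 2 ⌊y⌋₊ : ℕ) : ℝ) := by push_cast; rfl
    _ ≤ ⌊y⌋₊ := by exact_mod_cast Nat.pow_log_le_self 2 hfloor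
    _ ≤ y := Nat.floor_le (by linarith)

theorem lt_two_pow_natLog2_succ (y : ℝ) : y < (2 : ℝ) ^ (natLog2 y + 1) :=
  calc y < ⌊y⌋₊ + 1 := Nat.lt_floor_add_one y
    _ ≤ ((2 ^ (Nat.log 2 ⌊y⌋₊ + 1) : ℕ) : ℝ) := by
      exact_mod_cast Nat.lt_pow_succ_log_self one_lt_two ⌊y⌋₊
    _ = (2 : ℝ) ^ (natLog2 y + 1) := by push_cast; rfl

theorem natLog2_mono : Monotone natLog2 :=
  fun _ _ h => Nat.log_mono_right (Nat.floor_mono h)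

theorem two_rpow_neg_natCast (i : ℕ) : (2 : ℝ) ^ (-(i : ℝ)) = ((2 : ℝ) ^ i)⁻¹ := by
  rw [Real.rpow_neg zero_le_two, Real.rpow_natCast]

theorem sum_mul_le_card_mul {α : Type*} {s : Finset α} {Δ : α → ℝ} {w : α → ℕ} {a : ℝ} {τ : ℕ}
    (ha : 0 ≤ a) (hΔ : ∀ x ∈ s, Δ x ≤ a) (hw : ∀ x ∈ s, w x ≤ τ) :
    ∑ x ∈ s, Δ x * w x ≤ #s * (a * τ) := by
  rw [← nsmul_eq_mul]
  exact sum_le_card_nsmul _ _ _ fun x hx =>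
    mul_le_mul (hΔ x hx) (Nat.cast_le.mpr (hw x hx)) (Nat.cast_nonneg _) ha

section DyadicBand

variable {α : Type*} (X : Finset α) (Δ : α → ℝ)

noncomputable def dyadicBand (i : ℕ) : Finset α :=
  X.filter (fun x => (2 : ℝ) ^ (-(i : ℝ) - 1) < Δ x ∧ Δ x ≤ (2 : ℝ) ^ (-(i : ℝ)))

variable {X Δ}

theorem mem_dyadicBand {x : α} {i : ℕ} :
    x ∈ dyadicBand X Δ i ↔ x ∈ X ∧ ((2 : ℝ) ^ (i + 1))⁻¹ < Δ x ∧ Δ x ≤ ((2 : ℝ) ^ i)⁻¹ := by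
  have h : -(i : ℝ) - 1 = -((i + 1 : ℕ) : ℝ) := by push_cast; ring
  rw [dyadicBand, mem_filter, h, two_rpow_neg_natCast, two_rpow_neg_natCast]

theorem mem_dyadicBand_natLog2 {x : α} (hx : x ∈ X) (hpos : 0 < Δ x) (hle : Δ x ≤ 1) :
    x ∈ dyadicBand X Δ (natLog2 (Δ x)⁻¹) := by
  refine mem_dyadicBand.mpr ⟨hx, ?_, ?_⟩
  · exact inv_lt_of_inv_lt₀ hpos (lt_two_pow_natLog2_succ _)
  · exact le_inv_of_le_inv₀ (by positivity) (two_pow_natLog2_le (one_le_inv₀ hpos |>.mpr hle))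

theorem sum_filter_lt_le_sum_dyadicBand {ρ : ℝ} (hρ : 0 < ρ) (hΔ : ∀ x ∈ X, Δ x ≤ 1)
    {f : α → ℝ} (hf : ∀ x ∈ X, 0 ≤ f x) :
    ∑ x ∈ X with ρ < Δ x, f x ≤
      ∑ i ∈ range (natLog2 ρ⁻¹ + 1), ∑ x ∈ dyadicBand X Δ i, f x := by
  have hmaps : ∀ x ∈ X.filter (ρ < Δ ·), natLog2 (Δ x)⁻¹ ∈ range (natLog2 ρ⁻¹ + 1) := by
    intro x hx
    have hρx := (mem_filter.mp hx).2
    exact mem_range_succ_iff.mpr (natLog2_mono (inv_anti₀ hρ hρx.le))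
  -- group the arms by the band `natLog2 (Δ x)⁻¹` they belong to
  rw [← sum_fiberwise_of_maps_to hmaps]
  refine sum_le_sum fun i _ => sum_le_sum_of_subset_of_nonneg ?_ ?_
  · intro x hx
    obtain ⟨hxρ, rfl⟩ := mem_filter.mp hx
    obtain ⟨hxX, hρx⟩ := mem_filter.mp hxρ
    exact mem_dyadicBand_natLog2 hxX (hρ.trans hρx) (hΔ x hxX)
  · exact fun x hx _ => hf x (mem_dyadicBand.mp hx).1

theorem sum_dyadicBand_mul_le {n v w : α → ℕ} {τ : ℕ} {i : ℕ} {V C : ℝ}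
    (hnvw : ∀ x, n x = v x + w x) (hw : ∀ x, w x ≤ τ)
    (hv : ∑ x ∈ dyadicBand X Δ i, Δ x * v x ≤ V) (hcard : (#(dyadicBand X Δ i) : ℝ) ≤ C) :
    ∑ x ∈ dyadicBand X Δ i, Δ x * n x ≤ V + C * (((2 : ℝ) ^ i)⁻¹ * τ) :=
  calc ∑ x ∈ dyadicBand X Δ i, Δ x * n x
      = ∑ x ∈ dyadicBand X Δ i, Δ x * v x + ∑ x ∈ dyadicBand X Δ i, Δ x * w x := by
        simp only [hnvw, Nat.cast_add, mul_add, sum_add_distrib]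
    _ ≤ V + #(dyadicBand X Δ i) * (((2 : ℝ) ^ i)⁻¹ * τ) := by
        gcongr
        exact sum_mul_le_card_mul (by positivity) (fun x hx => (mem_dyadicBand.mp hx).2.2)
          fun x _ => hw x
    _ ≤ V + C * (((2 : ℝ) ^ i)⁻¹ * τ) := by gcongr

end DyadicBand

theorem sum_filter_not_lt_mul_le {α : Type*} {s : Finset α} {f g : α → ℝ} {ρ : ℝ}
    (hρ : 0 ≤ ρ) (hg : ∀ x ∈ s, 0 ≤ g x) :
    ∑ x ∈ s with ¬ρ < f x, f x * g x ≤ ρ * ∑ x ∈ s, g x :=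
  calc ∑ x ∈ s with ¬ρ < f x, f x * g x ≤ ∑ x ∈ s with ¬ρ < f x, ρ * g x := by
        refine sum_le_sum fun x hx => ?_
        obtain ⟨hxs, hfx⟩ := mem_filter.mp hx
        exact mul_le_mul_of_nonneg_right (not_lt.mp hfx) (hg x hxs)
    _ = ρ * ∑ x ∈ s with ¬ρ < f x, g x := (mul_sum _ _ _).symm
    _ ≤ ρ * ∑ x ∈ s, g x :=
        mul_le_mul_of_nonneg_left (sum_le_sum_of_subset_of_nonneg (filter_subset _ _)
          fun x hx _ => hg x hx) hρ

theorem geom_sum_range_succ_le_two_mul {q : ℝ} (hq : 2 ≤ q) (J : ℕ) :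
    ∑ i ∈ range (J + 1), q ^ i ≤ 2 * q ^ J := by
  have hq1 : 0 < q - 1 := by linarith
  rw [geom_sum_eq (by linarith), div_le_iff₀ hq1, pow_succ]
  nlinarith [pow_pos (by linarith : (0 : ℝ) < q) J]

theorem sum_range_two_rpow_mul_le {p M : ℝ} (hp : 1 ≤ p) {J : ℕ} (hJ : (2 : ℝ) ^ J ≤ M) :
    ∑ i ∈ range (J + 1), (2 : ℝ) ^ ((i : ℝ) * p) ≤ 2 * M ^ p := by
  have hpow : ∀ i : ℕ, (2 : ℝ) ^ ((i : ℝ) * p) = ((2 : ℝ) ^ p) ^ i := fun i => by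
    rw [mul_comm, Real.rpow_mul zero_le_two, Real.rpow_natCast]
  have hq : (2 : ℝ) ≤ 2 ^ p := by
    simpa using Real.rpow_le_rpow_of_exponent_le one_le_two hp
  calc ∑ i ∈ range (J + 1), (2 : ℝ) ^ ((i : ℝ) * p) = ∑ i ∈ range (J + 1), ((2 : ℝ) ^ p) ^ i :=
        sum_congr rfl fun i _ => hpow i
    _ ≤ 2 * ((2 : ℝ) ^ p) ^ J := geom_sum_range_succ_le_two_mul hq J
    _ = 2 * ((2 : ℝ) ^ J) ^ p := by rw [← hpow, Real.rpow_mul zero_le_two, Real.rpow_natCast]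
    _ ≤ 2 * M ^ p := by gcongr

theorem sum_range_two_rpow_mul_mul_inv_le {p M : ℝ} (hp : 0 ≤ p) {J : ℕ}
    (hJ : (2 : ℝ) ^ J ≤ M) :
    ∑ i ∈ range (J + 1), (2 : ℝ) ^ ((i : ℝ) * p) * ((2 : ℝ) ^ i)⁻¹ ≤ 2 * M ^ p := by
  have hterm : ∀ i ∈ range (J + 1), (2 : ℝ) ^ ((i : ℝ) * p) ≤ M ^ p := fun i hi => by
    rw [Real.rpow_mul zero_le_two, Real.rpow_natCast]
    have hiJ : (2 : ℝ) ^ i ≤ 2 ^ J := pow_le_pow_right₀ one_le_two (mem_range_succ_iff.mp hi)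
    exact Real.rpow_le_rpow (by positivity) (hiJ.trans hJ) hp
  calc ∑ i ∈ range (J + 1), (2 : ℝ) ^ ((i : ℝ) * p) * ((2 : ℝ) ^ i)⁻¹
      ≤ ∑ i ∈ range (J + 1), M ^ p * (1 / 2 : ℝ) ^ i := by
        refine sum_le_sum fun i hi => ?_
        rw [one_div, inv_pow]
        exact mul_le_mul_of_nonneg_right (hterm i hi) (by positivity)
    _ = M ^ p * ∑ i ∈ range (J + 1), (1 / 2 : ℝ) ^ i := (mul_sum _ _ _).symm
    _ ≤ M ^ p * 2 := by
        have hM : 0 ≤ M := (pow_nonneg zero_le_two J).trans hJ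
        exact mul_le_mul_of_nonneg_left (sum_geometric_two_le _) (Real.rpow_nonneg hM p)
    _ = 2 * M ^ p := mul_comm _ _

open scoped Classical in
theorem delayed_zooming_regret_decomposition_general {α : Type*} (T : ℕ)
    (X : Finset α) (n v w : ℕ → α → ℕ)
    (hnvw : ∀ t x, n t x = v t x + w t x)
    (τ : ℕ) (hw : ∀ t x, w t x ≤ τ)
    (Δ : α → ℝ) (hΔ : ∀ x ∈ X, Δ x ∈ Set.Icc (0 : ℝ) 1)
    (hpulls : ∑ x ∈ X, n T x ≤ T)
    (L c d : ℝ) (hL : 0 < L) (hc : 0 < c) (hd : 0 ≤ d)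
    (hband : ∀ i : ℕ,
      ∑ x ∈ X.filter (fun x => (2 : ℝ) ^ (-(i : ℝ) - 1) < Δ x ∧ Δ x ≤ (2 : ℝ) ^ (-(i : ℝ))),
        Δ x * v T x ≤ L * (2 : ℝ) ^ ((i : ℝ) * (d + 1)))
    (hcard : ∀ i : ℕ,
      ((X.filter (fun x => (2 : ℝ) ^ (-(i : ℝ) - 1) < Δ x ∧ Δ x ≤ (2 : ℝ) ^ (-(i : ℝ)))).card : ℝ)
        ≤ c * (2 : ℝ) ^ ((i : ℝ) * d)) :
    ∀ ρ ∈ Set.Ioo (0 : ℝ) 1,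
      ∑ x ∈ X, Δ x * n T x ≤ ρ * T + 2 * L * ρ ^ (-(d + 1)) + 2 * c * τ * ρ ^ (-d) := by
  rintro ρ ⟨hρ0, hρ1⟩
  have hJ : (2 : ℝ) ^ natLog2 ρ⁻¹ ≤ ρ⁻¹ := two_pow_natLog2_le (one_le_inv₀ hρ0 |>.mpr hρ1.le)
  have hsmall : ∑ x ∈ X with ¬ρ < Δ x, Δ x * n T x ≤ ρ * T :=
    (sum_filter_not_lt_mul_le hρ0.le fun _ _ => Nat.cast_nonneg _).trans
      (mul_le_mul_of_nonneg_left (by exact_mod_cast hpulls) hρ0.le)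
  have hlarge : ∑ x ∈ X with ρ < Δ x, Δ x * n T x ≤
      2 * L * ρ ^ (-(d + 1)) + 2 * c * τ * ρ ^ (-d) :=
    calc ∑ x ∈ X with ρ < Δ x, Δ x * n T x
        ≤ ∑ i ∈ range (natLog2 ρ⁻¹ + 1), ∑ x ∈ dyadicBand X Δ i, Δ x * n T x :=
          sum_filter_lt_le_sum_dyadicBand hρ0 (fun x hx => (hΔ x hx).2)
            fun x hx => mul_nonneg (hΔ x hx).1 (Nat.cast_nonneg _)
      _ ≤ L * ∑ i ∈ range (natLog2 ρ⁻¹ + 1), (2 : ℝ) ^ ((i : ℝ) * (d + 1)) + c * τ *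
            ∑ i ∈ range (natLog2 ρ⁻¹ + 1), (2 : ℝ) ^ ((i : ℝ) * d) * ((2 : ℝ) ^ i)⁻¹ := by
          rw [mul_sum, mul_sum, ← sum_add_distrib]
          refine sum_le_sum fun i _ => ?_
          exact (sum_dyadicBand_mul_le (hnvw T) (hw T) (hband i) (hcard i)).trans_eq (by ring)
      _ ≤ L * (2 * ρ⁻¹ ^ (d + 1)) + c * τ * (2 * ρ⁻¹ ^ d) := by
          gcongr
          · exact sum_range_two_rpow_mul_le (by linarith) hJ
          · exact sum_range_two_rpow_mul_mul_inv_le hd hJ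
      _ = 2 * L * ρ ^ (-(d + 1)) + 2 * c * τ * ρ ^ (-d) := by
          rw [Real.inv_rpow hρ0.le, Real.inv_rpow hρ0.le, ← Real.rpow_neg hρ0.le,
            ← Real.rpow_neg hρ0.le]
          ring
  rw [← sum_filter_add_sum_filter_not X (ρ < Δ ·)]
  linarith

open scoped Classical in
theorem delayed_zooming_regret_decomposition {α : Type*} (T : ℕ) (hT : 0 < T)
    (X : Finset α) (n v w : ℕ → α → ℕ)
    (hnvw : ∀ t x, n t x = v t x + w t x)
    (τ : ℕ) (hw : ∀ t x, w t x ≤ τ)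
    (Δ : α → ℝ) (hΔ : ∀ x ∈ X, Δ x ∈ Set.Icc (0 : ℝ) 1)
    (hpulls : ∑ x ∈ X, n T x ≤ T)
    (L c d : ℝ) (hL : 0 < L) (hc : 0 < c) (hd : 0 ≤ d)
    (hband : ∀ i : ℕ,
      ∑ x ∈ X.filter (fun x => (2 : ℝ) ^ (-(i : ℝ) - 1) < Δ x ∧ Δ x ≤ (2 : ℝ) ^ (-(i : ℝ))),
        Δ x * v T x ≤ L * (2 : ℝ) ^ ((i : ℝ) * (d + 1)))
    (hcard : ∀ i : ℕ,
      ((X.filter (fun x => (2 : ℝ) ^ (-(i : ℝ) - 1) < Δ x ∧ Δ x ≤ (2 : ℝ) ^ (-(i : ℝ)))).card : ℝ)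
        ≤ c * (2 : ℝ) ^ ((i : ℝ) * d)) :
    ∀ ρ ∈ Set.Ioo (0 : ℝ) 1,
      ∑ x ∈ X, Δ x * n T x ≤ ρ * T + 2 * L * ρ ^ (-(d + 1)) + 2 * c * τ * ρ ^ (-d) :=
  delayed_zooming_regret_decomposition_general T X n v w hnvw τ hw Δ hΔ hpulls L c d hL hc hd hband
    hcard
end
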